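/- In the algebra Λ ⊗ B define dX_i := Σ_{a=1}^n e_a ⊗ ι(φ^a_i) and identify X_j with 1 ⊗ X_j. Then for all i, j one has the commutation relation dX_i·X_j − X_j·dX_i = Σ_{s,r,l} dX_s·(1 ⊗ ι((φ⁻¹)^s_r·δ_l(φ^r_i)·φ^l_j)); that is, the relation [dx̂_i, x̂_j] = Σ dx̂_s (φ⁻¹)^s_r (∂_l φ^r_i) φ^l_j of the twisted differential calculus holds in the realization. -/

import Mathlib

open scoped BigOperators TensorProduct Matrix

/-!
Both sides are written as sums `∑_a e_a ⊗ ι(·)`. On the left, `[ι(φ^a_i), X_j]` equals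
`∑_l ι(δ_l(φ^a_i) φ^l_j)`, because `x_l` commutes with `ι` up to `δ_l` and `ι(A)` is commutative.
On the right, the coefficient of `e_a` is `ι((φ (ψ w))_a)` with `w_r = ∑_l δ_l(φ^r_i) φ^l_j`,
and `φ ψ = 1` collapses it to the same `ι(w_a)`.
-/

theorem mul_mul_sub_mul_mul_of_commute {R : Type*} [Ring R] {y z : R} (h : Commute y z) (x : R) :
    y * (x * z) - x * z * y = (y * x - x * y) * z := by
  rw [mul_assoc x z y, ← h.eq]
  noncomm_ring

theorem map_mul_sum_sub_sum_mul_map {A B F m : Type*} [CommRing A] [Ring B] [Fintype m]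
    [FunLike F A B] [RingHomClass F A B] (ι : F) {x : m → B} {D : m → A → A}
    (hrel : ∀ a l, ι a * x l - x l * ι a = ι (D l a)) (a : A) (c : m → A) :
    ι a * ∑ l, x l * ι (c l) - (∑ l, x l * ι (c l)) * ι a = ∑ l, ι (D l a * c l) := by
  rw [Finset.mul_sum, Finset.sum_mul, ← Finset.sum_sub_distrib]
  refine Finset.sum_congr rfl fun l _ => ?_
  rw [mul_mul_sub_mul_mul_of_commute ((Commute.all a (c l)).map ι), hrel, map_mul]

namespace Algebra.TensorProduct

variable {k R S : Type*} [CommSemiring k] [Ring R] [Algebra k R] [Ring S] [Algebra k S]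

theorem tmul_mul_one_tmul_sub (a : R) (b c : S) :
    a ⊗ₜ[k] b * (1 ⊗ₜ c) - 1 ⊗ₜ c * (a ⊗ₜ[k] b) = a ⊗ₜ (b * c - c * b) := by
  rw [tmul_mul_tmul, tmul_mul_tmul, mul_one, one_mul, ← TensorProduct.tmul_sub]

theorem sum_sum_tmul_mul_one_tmul {A F m m' : Type*} [CommRing A] [Fintype m] [Fintype m']
    [FunLike F A S] [RingHomClass F A S] (ι : F) (e : m → R) (φ : m → m' → A) (v : m' → A) :
    ∑ s, (∑ a, e a ⊗ₜ[k] ι (φ a s)) * (1 ⊗ₜ ι (v s)) = ∑ a, e a ⊗ₜ ι ((Matrix.of φ *ᵥ v) a) := by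
  simp only [Finset.sum_mul, tmul_mul_tmul, mul_one, ← map_mul, Matrix.mulVec, dotProduct,
    Matrix.of_apply, map_sum, TensorProduct.tmul_sum]
  exact Finset.sum_comm

end Algebra.TensorProduct

theorem twisted_differential_commutation_general
    (k : Type*) [Field k] (n : ℕ)
    (A : Type*) [CommRing A] [Algebra k A]
    (δ : Fin n → Derivation k A A)
    (φ : Fin n → Fin n → A)
    (ψ : Matrix (Fin n) (Fin n) A)
    (hψ₁ : Matrix.of φ * ψ = 1)
    (B : Type*) [Ring B] [Algebra k B]
    (ι : A →ₐ[k] B)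
    (x : Fin n → B)
    (hrel : ∀ (a : A) (j : Fin n), ι a * x j - x j * ι a = ι (δ j a))
    (X : Fin n → B)
    (hX : ∀ i, X i = ∑ a, x a * ι (φ a i))
    (dX : Fin n → ExteriorAlgebra k (Fin n → k) ⊗[k] B)
    (hdX : ∀ i, dX i = ∑ a, ExteriorAlgebra.ι k (Pi.single a (1 : k)) ⊗ₜ[k] ι (φ a i)) :
    ∀ i j, dX i * ((1 : ExteriorAlgebra k (Fin n → k)) ⊗ₜ[k] X j)
        - ((1 : ExteriorAlgebra k (Fin n → k)) ⊗ₜ[k] X j) * dX i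
      = ∑ s, ∑ r, ∑ l, dX s *
          ((1 : ExteriorAlgebra k (Fin n → k)) ⊗ₜ[k] ι (ψ s r * δ l (φ r i) * φ l j)) := by
  intro i j
  set w : Fin n → A := fun r => ∑ l, δ l (φ r i) * φ l j
  have hw : Matrix.of φ *ᵥ (ψ *ᵥ w) = w := by
    rw [Matrix.mulVec_mulVec, hψ₁, Matrix.one_mulVec]
  have rhs : ∑ s, ∑ r, ∑ l, dX s *
        ((1 : ExteriorAlgebra k (Fin n → k)) ⊗ₜ[k] ι (ψ s r * δ l (φ r i) * φ l j))
      = ∑ s, dX s * (1 ⊗ₜ ι ((ψ *ᵥ w) s)) := by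
    simp only [Matrix.mulVec, dotProduct, w, Finset.mul_sum, map_sum, TensorProduct.tmul_sum,
      mul_assoc]
  rw [rhs, hdX i, Finset.sum_mul, Finset.mul_sum, ← Finset.sum_sub_distrib]
  simp only [hdX]
  rw [Algebra.TensorProduct.sum_sum_tmul_mul_one_tmul ι, hw]
  refine Finset.sum_congr rfl fun a _ => ?_
  rw [Algebra.TensorProduct.tmul_mul_one_tmul_sub, hX, map_mul_sum_sub_sum_mul_map ι hrel, map_sum]

/-- in `Λ ⊗ B`, with `dX i = ∑ a, e_a ⊗ ι(φ^a_i)` and `X j`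
identified with `1 ⊗ X j`, the commutation relation
`[dx̂_i, x̂_j] = ∑ dx̂_s (φ⁻¹)^s_r (∂_l φ^r_i) φ^l_j` of the twisted
differential calculus holds in the realization. -/
theorem twisted_differential_commutation
    (k : Type*) [Field k] [CharZero k] (n : ℕ) (hn : 0 < n)
    (𝔤 : Type*) [LieRing 𝔤] [LieAlgebra k 𝔤]
    (b : Module.Basis (Fin n) k 𝔤)
    (C : Fin n → Fin n → Fin n → k)
    (hC : ∀ i j, ⁅b i, b j⁆ = ∑ s, C s i j • b s)
    (A : Type*) [CommRing A] [Algebra k A]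
    (δ : Fin n → Derivation k A A)
    (hδ : ∀ r s, ⁅δ r, δ s⁆ = 0)
    (φ : Fin n → Fin n → A)
    (hφ : ∀ i j m, ∑ l, (φ l j * δ l (φ m i) - φ l i * δ l (φ m j))
        = ∑ s, C s i j • φ m s)
    (ψ : Matrix (Fin n) (Fin n) A)
    (hψ₁ : Matrix.of φ * ψ = 1) (hψ₂ : ψ * Matrix.of φ = 1)
    (B : Type*) [Ring B] [Algebra k B]
    (ι : A →ₐ[k] B)
    (x : Fin n → B)
    (hxx : ∀ i j, x i * x j = x j * x i)
    (hrel : ∀ (a : A) (j : Fin n), ι a * x j - x j * ι a = ι (δ j a))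
    (X : Fin n → B)
    (hX : ∀ i, X i = ∑ a, x a * ι (φ a i))
    (dX : Fin n → ExteriorAlgebra k (Fin n → k) ⊗[k] B)
    (hdX : ∀ i, dX i = ∑ a, ExteriorAlgebra.ι k (Pi.single a (1 : k)) ⊗ₜ[k] ι (φ a i)) :
    ∀ i j, dX i * ((1 : ExteriorAlgebra k (Fin n → k)) ⊗ₜ[k] X j)
        - ((1 : ExteriorAlgebra k (Fin n → k)) ⊗ₜ[k] X j) * dX i
      = ∑ s, ∑ r, ∑ l, dX s *
          ((1 : ExteriorAlgebra k (Fin n → k)) ⊗ₜ[k] ι (ψ s r * δ l (φ r i) * φ l j)) :=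
  twisted_differential_commutation_general k n A δ φ ψ hψ₁ B ι x hrel X hX dX hdX
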